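/- arXiv:2602.05120 — 4 statements merged into one kernel-verified Lean document; each statement's English description precedes it below -/
import Mathlib

section
/- Certifiable Boolean Reasoning (Theorem 'StructureAware'): Fix a depth Δ ∈ ℕ₊, a width Υ ∈ ℕ₊, and layer widths B_in = B_0, B_1, …, B_Δ = 1 with each B_l ≤ Υ. Then for every choice of the trainable parameters — the lifting matrix W ∈ ℝ^{B_1×2B_in}, the gate-weight matrices {W^{(l:σ)}}_{l=1}^{Δ−1}, and the edge-weight matrices determining the random one-hot adjacency matrices {𝐄^{(l:1:e)}}_{l=1}^{Δ−1} and {𝐄^{(l:2:e)}}_{l=1}^{Δ−1} — the random function 𝐂̂ : Ω × {0,1}^{B_in} → {0,1} defined by the Stochastic Boolean Circuit recursion satisfies ℙ( 𝐂̂ ∈ CIRCUIT^{B_in}_{Δ,Υ} ) = 1; that is, almost surely the sampled function x ↦ 𝐂̂(ω, x) is computed by a valid Boolean circuit of depth Δ and width at most Υ whose gates all have fan-in 2 and fan-out 1. -/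
/-!
Statement 0: Certifiable Boolean Reasoning (Theorem `StructureAware`).

We formalize layered Boolean circuits of fan-in 2 / fan-out 1 (with an initial
bit-lifting channel selecting input bits or their negations), the Stochastic
Boolean Circuit (SBC) model (random lifting selections, random one-hot edge
selections, and random gate selections, whose marginal laws are the softmax
laws determined by the trainable parameters), and state that for every choice
of trainable parameters the sampled function is almost surely computed by a
valid Boolean circuit of depth Δ = D+1 and width at most Υ.
-/

open MeasureTheory ProbabilityTheory

/-- Softmax on `ℝ^n`. -/
noncomputable def softmax {n : ℕ} (w : Fin n → ℝ) : Fin n → ℝ :=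
  fun i => Real.exp (w i) / ∑ j, Real.exp (w j)

/-- The 16 fan-in-2, fan-out-1 Boolean gates, enumerated by their truth tables
(`i.val.testBit` of the corner index, corners ordered `(0,0),(0,1),(1,0),(1,1)`). -/
def gate16 (i : Fin 16) : Bool → Bool → Bool :=
  fun a b => Nat.testBit i.val (2 * a.toNat + b.toNat)

/-- Decoding of an index `j ∈ [2B]` as a literal: an input bit (`j < B`,
second component `false`) or its negation (`j ≥ B`, second component `true`). -/
def liftDecode {Bin : ℕ} (j : Fin (2 * Bin)) : Fin Bin × Bool :=
  if h : j.val < Bin then (⟨j.val, h⟩, false)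
  else (⟨j.val - Bin, by have := j.isLt; omega⟩, true)

/-- Law of the second edge selector:
`SM(η(1 − SM(ηW₁)) ⊙ SM(ηW₂))`. -/
noncomputable def edgeLaw2 {n : ℕ} (η : ℝ) (W1 W2 : Fin n → ℝ) : Fin n → ℝ :=
  softmax (fun m => η * ((1 - softmax (η • W1) m) * softmax (η • W2) m))

/-- A (deterministic) layered Boolean circuit on `Bin` input bits with layer
widths `B 1, B 2, …` : an initial bit-lifting channel (each node of layer 1
selects an input bit or its negation), and for each later layer each node
selects exactly two predecessors (fan-in 2) and a gate among the 16 fan-in-2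
Boolean gates. -/
structure BoolCircuit (Bin : ℕ) (B : ℕ → ℕ) where
  lift : Fin (B 1) → Fin Bin × Bool
  edge1 : (l : ℕ) → Fin (B (l + 2)) → Fin (B (l + 1))
  edge2 : (l : ℕ) → Fin (B (l + 2)) → Fin (B (l + 1))
  gate : (l : ℕ) → Fin (B (l + 2)) → Fin 16

/-- Value of node `i` of layer `l+1` (layer 1 is the lifted layer). -/
def BoolCircuit.val {Bin : ℕ} {B : ℕ → ℕ} (C : BoolCircuit Bin B)
    (x : Fin Bin → Bool) : (l : ℕ) → Fin (B (l + 1)) → Bool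
  | 0, i => xor (C.lift i).2 (x (C.lift i).1)
  | l + 1, i => gate16 (C.gate l i) (C.val x l (C.edge1 l i)) (C.val x l (C.edge2 l i))

/-- Output of a circuit of depth `Δ = D + 1` (its last layer has one node). -/
def BoolCircuit.out {Bin : ℕ} {B : ℕ → ℕ} (C : BoolCircuit Bin B) (D : ℕ)
    (h1 : B (D + 1) = 1) (x : Fin Bin → Bool) : Bool :=
  C.val x D ⟨0, by omega⟩

/-- `f ∈ CIRCUIT^{Bin}_{Δ,Υ}` with `Δ = D + 1`: `f` is computed by a layered
fan-in-2 fan-out-1 Boolean circuit of depth `D + 1`, one output node, and all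
layer widths at most `Υ`. -/
def InCircuitClass (Bin D Υ : ℕ) (f : (Fin Bin → Bool) → Bool) : Prop :=
  ∃ B : ℕ → ℕ, (∀ l ≤ D + 1, B l ≤ Υ) ∧
    ∃ h1 : B (D + 1) = 1, ∃ C : BoolCircuit Bin B, ∀ x, C.out D h1 x = f x

/-- The Stochastic Boolean Circuit model of depth `Δ = D + 1` on `Bin` input
bits with layer widths `B 1, …, B (D+1)`: trainable parameters (a temperature
`η`, lifting weights `Wlift`, edge weights `W1, W2`, gate weights `Wgate`)
together with the random lifting / edge / gate selections, whose marginal laws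
are the softmax laws prescribed by the parameters. -/
structure SBC (Ω : Type*) [MeasureSpace Ω] (Bin D : ℕ) (B : ℕ → ℕ) where
  η : ℝ
  Wlift : Fin (B 1) → Fin (2 * Bin) → ℝ
  W1 : (l : ℕ) → Fin (B (l + 2)) → Fin (B (l + 1)) → ℝ
  W2 : (l : ℕ) → Fin (B (l + 2)) → Fin (B (l + 1)) → ℝ
  Wgate : (l : ℕ) → Fin (B (l + 2)) → Fin 16 → ℝ
  Lift : Ω → Fin (B 1) → Fin Bin × Bool
  Edge1 : Ω → (l : ℕ) → Fin (B (l + 2)) → Fin (B (l + 1))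
  Edge2 : Ω → (l : ℕ) → Fin (B (l + 2)) → Fin (B (l + 1))
  Gate : Ω → (l : ℕ) → Fin (B (l + 2)) → Fin 16
  lift_law : ∀ i j,
    ℙ {ω | Lift ω i = liftDecode j} = ENNReal.ofReal (softmax (Wlift i) j)
  edge1_law : ∀ l, l + 2 ≤ D + 1 → ∀ k m,
    ℙ {ω | Edge1 ω l k = m} = ENNReal.ofReal (softmax (η • W1 l k) m)
  edge2_law : ∀ l, l + 2 ≤ D + 1 → ∀ k m,
    ℙ {ω | Edge2 ω l k = m} = ENNReal.ofReal (edgeLaw2 η (W1 l k) (W2 l k) m)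
  gate_law : ∀ l, l + 2 ≤ D + 1 → ∀ k i,
    ℙ {ω | Gate ω l k = i} = ENNReal.ofReal (softmax (Wgate l k) i)

/-- The SBC recursion: value of node `i` of layer `l+1` at sample `ω`. -/
def SBC.val {Ω : Type*} [MeasureSpace Ω] {Bin D : ℕ} {B : ℕ → ℕ}
    (M : SBC Ω Bin D B) (ω : Ω) (x : Fin Bin → Bool) :
    (l : ℕ) → Fin (B (l + 1)) → Bool
  | 0, i => xor (M.Lift ω i).2 (x (M.Lift ω i).1)
  | l + 1, i =>
      gate16 (M.Gate ω l i) (M.val ω x l (M.Edge1 ω l i)) (M.val ω x l (M.Edge2 ω l i))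

/-- The sampled function `𝐂̂(ω, ·)` of an SBC of depth `D + 1`. -/
def SBC.out {Ω : Type*} [MeasureSpace Ω] {Bin D : ℕ} {B : ℕ → ℕ}
    (M : SBC Ω Bin D B) (h1 : B (D + 1) = 1) (ω : Ω) (x : Fin Bin → Bool) : Bool :=
  M.val ω x D ⟨0, by omega⟩

/-- **Certifiable Boolean Reasoning.** For every choice of the trainable
parameters of the Stochastic Boolean Circuit model (of depth `Δ = D + 1`,
layer widths `B_0 = Bin, B_1, …, B_Δ = 1`, all at most `Υ`), the sampled
function `x ↦ 𝐂̂(ω, x)` is almost surely computed by a valid Boolean circuit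
of depth `Δ` and width at most `Υ` all of whose gates have fan-in 2 and
fan-out 1. -/
theorem StructureAware
    {Ω : Type*} [MeasureSpace Ω] [IsProbabilityMeasure (ℙ : Measure Ω)]
    (Bin D Υ : ℕ) (hBin : 0 < Bin) (hΥ : 0 < Υ)
    (B : ℕ → ℕ) (hB0 : B 0 = Bin) (h1 : B (D + 1) = 1)
    (hwidth : ∀ l ≤ D + 1, B l ≤ Υ)
    (M : SBC Ω Bin D B) :
    ℙ {ω | InCircuitClass Bin D Υ (M.out h1 ω)} = 1 := by
  have h : {ω : Ω | InCircuitClass Bin D Υ (M.out h1 ω)} = Set.univ := by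
    ext ω
    simp only [Set.mem_setOf_eq, Set.mem_univ, iff_true]
    refine ⟨B, hwidth, h1, ⟨M.Lift ω, M.Edge1 ω, M.Edge2 ω, M.Gate ω⟩, fun x => ?_⟩
    have hval : ∀ l (i : Fin (B (l + 1))),
        BoolCircuit.val ⟨M.Lift ω, M.Edge1 ω, M.Edge2 ω, M.Gate ω⟩ x l i
          = M.val ω x l i := by
      intro l
      induction l with
      | zero => intro i; rfl
      | succ l ih => intro i; simp [BoolCircuit.val, SBC.val, ih]
    exact hval D _
  rw [h]
  simp
end

section
/- Universal Boolean Reasoning (Theorem 'UniversalReasoning'): Let B_in ∈ ℕ₊ and let f : {0,1}^{B_in} → {0,1} be any Boolean function. Then for every failure probability 0 < δ ≤ 1 there exists a Stochastic Boolean Circuit 𝐂̂ : Ω × {0,1}^{B_in} → {0,1} (i.e., a choice of depth, layer widths, and all trainable parameters of the SBC model) such that ℙ( 𝐂̂(x) = f(x) for all x ∈ {0,1}^{B_in} ) ≥ 1 − δ. -/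
/-!
Statement 0: Certifiable Boolean Reasoning (Theorem `StructureAware`).

We formalize layered Boolean circuits of fan-in 2 / fan-out 1 (with an initial
bit-lifting channel selecting input bits or their negations), the Stochastic
Boolean Circuit (SBC) model (random lifting selections, random one-hot edge
selections, and random gate selections, whose marginal laws are the softmax
laws determined by the trainable parameters), and state that for every choice
of trainable parameters the sampled function is almost surely computed by a
valid Boolean circuit of depth Δ = D+1 and width at most Υ.
-/

open MeasureTheory ProbabilityTheory

/-!
Every Boolean function is a disjunction of minterms, hence is computed by a layered fan-in-2
circuit `C`. An SBC can be aimed at `C`: put logit `H` on the literal, the gate and the edges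
that `C` selects. As `H → ∞` each selection hits `C`'s choice with
probability tending to `1`, and a union bound over the finitely many selections leaves a
failure probability below `δ`. Only the marginal laws of the selections enter.
-/

open Filter Topology

section Circuits

abbrev BoolFun (n : ℕ) := (Fin n → Bool) → Bool

variable {Bin : ℕ}

/-- The functions computed at node level `l` (i.e. in layer `l + 1`) of a layered fan-in-2
circuit. -/
def Realizable (Bin : ℕ) : ℕ → Set (BoolFun Bin)
  | 0 => Set.range fun p : Fin Bin × Bool => fun x => xor p.2 (x p.1)
  | l + 1 => Set.range fun q : Fin 16 × Realizable Bin l × Realizable Bin l =>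
      fun x => gate16 q.1 ((q.2.1 : BoolFun Bin) x) ((q.2.2 : BoolFun Bin) x)

lemma realizable_monotone : Monotone (Realizable Bin) :=
  monotone_nat_of_le_succ fun _ g hg =>
    ⟨(12, ⟨g, hg⟩, ⟨g, hg⟩), funext fun x =>
      show gate16 12 (g x) (g x) = g x by cases g x <;> rfl⟩

lemma literal_mem_iUnion_realizable (i : Fin Bin) (b : Bool) :
    (fun x => xor b (x i)) ∈ ⋃ l, Realizable Bin l :=
  Set.mem_iUnion.2 ⟨0, (i, b), rfl⟩

lemma gate_mem_iUnion_realizable (γ : Fin 16) {u v : BoolFun Bin}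
    (hu : u ∈ ⋃ l, Realizable Bin l) (hv : v ∈ ⋃ l, Realizable Bin l) :
    (fun x => gate16 γ (u x) (v x)) ∈ ⋃ l, Realizable Bin l := by
  obtain ⟨l, hu⟩ := Set.mem_iUnion.1 hu
  obtain ⟨m, hv⟩ := Set.mem_iUnion.1 hv
  exact Set.mem_iUnion.2 ⟨max l m + 1, (γ, ⟨u, realizable_monotone (le_max_left l m) hu⟩,
    ⟨v, realizable_monotone (le_max_right l m) hv⟩), rfl⟩

lemma and_mem_iUnion_realizable {u v : BoolFun Bin}
    (hu : u ∈ ⋃ l, Realizable Bin l) (hv : v ∈ ⋃ l, Realizable Bin l) :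
    (fun x => u x && v x) ∈ ⋃ l, Realizable Bin l := by
  have hand : ∀ a b, gate16 8 a b = (a && b) := by decide
  simpa only [hand] using gate_mem_iUnion_realizable 8 hu hv

lemma or_mem_iUnion_realizable {u v : BoolFun Bin}
    (hu : u ∈ ⋃ l, Realizable Bin l) (hv : v ∈ ⋃ l, Realizable Bin l) :
    (fun x => u x || v x) ∈ ⋃ l, Realizable Bin l := by
  have hor : ∀ a b, gate16 14 a b = (a || b) := by decide
  simpa only [hor] using gate_mem_iUnion_realizable 14 hu hv

lemma const_mem_iUnion_realizable (hBin : 0 < Bin) (b : Bool) :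
    (fun _ => b) ∈ ⋃ l, Realizable Bin l := by
  have hconst : ∀ a, gate16 (if b then 15 else 0) a a = b := by cases b <;> decide
  have hx := literal_mem_iUnion_realizable (Bin := Bin) ⟨0, hBin⟩ false
  simpa only [hconst] using gate_mem_iUnion_realizable (if b then 15 else 0) hx hx

lemma decide_eq_mem_iUnion_realizable (hBin : 0 < Bin) (a : Fin Bin → Bool) :
    (fun x => decide (x = a)) ∈ ⋃ l, Realizable Bin l := by
  suffices h : ∀ s : Finset (Fin Bin),
      (fun x => decide (∀ i ∈ s, x i = a i)) ∈ ⋃ l, Realizable Bin l by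
    simpa [funext_iff] using h Finset.univ
  intro s
  induction s using Finset.induction with
  | empty => simpa using const_mem_iUnion_realizable hBin true
  | insert j s _ ih =>
    have hlit : ∀ x : Fin Bin → Bool, decide (x j = a j) = xor (!a j) (x j) := fun x => by
      cases a j <;> cases x j <;> rfl
    simpa [Finset.forall_mem_insert, hlit] using
      and_mem_iUnion_realizable (literal_mem_iUnion_realizable j (!a j)) ih

lemma iUnion_realizable_eq_univ (hBin : 0 < Bin) : ⋃ l, Realizable Bin l = Set.univ := by
  suffices h : ∀ T : Finset (Fin Bin → Bool),
      (fun x => decide (x ∈ T)) ∈ ⋃ l, Realizable Bin l by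
    refine Set.eq_univ_of_forall fun f => ?_
    simpa using h (Finset.univ.filter fun x => f x)
  intro T
  induction T using Finset.induction with
  | empty => simpa using const_mem_iUnion_realizable hBin false
  | insert a T _ ih =>
    simpa [Finset.mem_insert] using
      or_mem_iUnion_realizable (decide_eq_mem_iUnion_realizable hBin a) ih

end Circuits

section UniversalCircuit

variable {Bin : ℕ}

noncomputable def Realizable.literal (g : Realizable Bin 0) : Fin Bin × Bool :=
  Set.rangeSplitting _ g

lemma Realizable.literal_spec (g : Realizable Bin 0) (x : Fin Bin → Bool) :
    (g : BoolFun Bin) x = xor (Realizable.literal g).2 (x (Realizable.literal g).1) :=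
  (congrFun (Set.apply_rangeSplitting _ g) x).symm

noncomputable def Realizable.decompose {l : ℕ} (g : Realizable Bin (l + 1)) :
    Fin 16 × Realizable Bin l × Realizable Bin l :=
  Set.rangeSplitting _ g

lemma Realizable.decompose_spec {l : ℕ} (g : Realizable Bin (l + 1)) (x : Fin Bin → Bool) :
    (g : BoolFun Bin) x =
      gate16 (Realizable.decompose g).1 (((Realizable.decompose g).2.1 : BoolFun Bin) x)
        (((Realizable.decompose g).2.2 : BoolFun Bin) x) :=
  (congrFun (Set.apply_rangeSplitting _ g) x).symm

/-- Layer `l + 1 ≤ D` holds two copies of every function realizable at level `l`, so that the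
two inputs of a gate are always distinct nodes; layer `D + 1` is the output node. -/
noncomputable def universalWidth (Bin D : ℕ) : ℕ → ℕ
  | 0 => 1
  | l + 1 => if l = D then 1 else Nat.card (Bool × Realizable Bin l)

lemma universalWidth_pos (hBin : 0 < Bin) (D l : ℕ) : 0 < universalWidth Bin D l := by
  rcases l with _ | l
  · exact Nat.one_pos
  have : Nonempty (Realizable Bin l) :=
    ⟨⟨_, realizable_monotone (Nat.zero_le l) ⟨(⟨0, hBin⟩, false), rfl⟩⟩⟩
  simp only [universalWidth]
  split_ifs
  exacts [Nat.one_pos, Nat.card_pos]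

noncomputable def layerEquiv (D : ℕ) {l : ℕ} (hl : l ≠ D) :
    Bool × Realizable Bin l ≃ Fin (universalWidth Bin D (l + 1)) :=
  (Finite.equivFin _).trans (finCongr (by simp [universalWidth, hl]))

variable (f : BoolFun Bin) (D : ℕ) (hf : f ∈ Realizable Bin D)

noncomputable def universalNode (l : ℕ) (j : Fin (universalWidth Bin D (l + 1))) :
    Realizable Bin l :=
  if h : l = D then ⟨f, h ▸ hf⟩ else ((layerEquiv D h).symm j).2

lemma universalNode_layerEquiv {l : ℕ} (hl : l ≠ D) (b : Bool) (g : Realizable Bin l) :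
    universalNode f D hf l (layerEquiv D hl (b, g)) = g := by
  simp [universalNode, hl]

noncomputable def universalCircuit : BoolCircuit Bin (universalWidth Bin D) where
  lift j := Realizable.literal (universalNode f D hf 0 j)
  edge1 l k := if h : l = D then ⟨0, by simp [universalWidth, h]⟩
    else layerEquiv D h (false, (Realizable.decompose (universalNode f D hf (l + 1) k)).2.1)
  edge2 l k := if h : l = D then ⟨0, by simp [universalWidth, h]⟩
    else layerEquiv D h (true, (Realizable.decompose (universalNode f D hf (l + 1) k)).2.2)
  gate l k := (Realizable.decompose (universalNode f D hf (l + 1) k)).1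

lemma universalCircuit_val (x : Fin Bin → Bool) :
    ∀ l ≤ D, ∀ j, (universalCircuit f D hf).val x l j = (universalNode f D hf l j : BoolFun Bin) x
  | 0, _, j => (Realizable.literal_spec (universalNode f D hf 0 j) x).symm
  | l + 1, hl, j => by
    have hlD : l ≠ D := by omega
    simp only [BoolCircuit.val, universalCircuit_val x l (by omega)]
    simp only [universalCircuit, dif_neg hlD, universalNode_layerEquiv]
    exact (Realizable.decompose_spec (universalNode f D hf (l + 1) j) x).symm

lemma universalCircuit_edge1_ne_edge2 {l : ℕ} (hl : l < D)
    (k : Fin (universalWidth Bin D (l + 2))) :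
    (universalCircuit f D hf).edge1 l k ≠ (universalCircuit f D hf).edge2 l k := by
  simp [universalCircuit, hl.ne]

lemma universalCircuit_out (h1 : universalWidth Bin D (D + 1) = 1) (x : Fin Bin → Bool) :
    (universalCircuit f D hf).out D h1 x = f x := by
  simp [BoolCircuit.out, universalCircuit_val f D hf x D le_rfl, universalNode]

end UniversalCircuit

theorem exists_boolCircuit {Bin : ℕ} (hBin : 0 < Bin) (f : BoolFun Bin) :
    ∃ (D : ℕ) (B : ℕ → ℕ) (h1 : B (D + 1) = 1) (C : BoolCircuit Bin B), (∀ l, 0 < B l) ∧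
      (∀ l < D, ∀ k, C.edge1 l k ≠ C.edge2 l k) ∧ ∀ x, C.out D h1 x = f x := by
  obtain ⟨D, hf⟩ := Set.mem_iUnion.1 ((iUnion_realizable_eq_univ hBin).symm ▸ Set.mem_univ f)
  exact ⟨D, universalWidth Bin D, by simp [universalWidth], universalCircuit f D hf,
    universalWidth_pos hBin D, fun l hl k => universalCircuit_edge1_ne_edge2 f D hf hl k,
    universalCircuit_out f D hf _⟩

section Softmax

variable {n : ℕ}

lemma softmax_nonneg (w : Fin n → ℝ) (j : Fin n) : 0 ≤ softmax w j := by
  unfold softmax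
  positivity

lemma sum_softmax [NeZero n] (w : Fin n → ℝ) : ∑ j, softmax w j = 1 := by
  have hpos : 0 < ∑ j, Real.exp (w j) :=
    Finset.sum_pos (fun j _ => Real.exp_pos _) Finset.univ_nonempty
  simp only [softmax, ← Finset.sum_div, div_self hpos.ne']

lemma softmax_le_one [NeZero n] (w : Fin n → ℝ) (j : Fin n) : softmax w j ≤ 1 :=
  sum_softmax w ▸ Finset.single_le_sum (fun i _ => softmax_nonneg w i) (Finset.mem_univ j)

lemma sum_erase_softmax (w : Fin n → ℝ) (t : Fin n) :
    ∑ m ∈ Finset.univ.erase t, softmax w m = 1 - softmax w t := by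
  have : NeZero n := ⟨t.pos.ne'⟩
  rw [← sum_softmax w, ← Finset.add_sum_erase _ _ (Finset.mem_univ t), add_sub_cancel_left]

lemma softmax_le_one_sub {w : Fin n → ℝ} {m t : Fin n} (h : m ≠ t) :
    softmax w m ≤ 1 - softmax w t :=
  sum_erase_softmax w t ▸ Finset.single_le_sum (fun i _ => softmax_nonneg w i)
    (Finset.mem_erase.2 ⟨h, Finset.mem_univ m⟩)

lemma softmax_eq_inv_sum_exp_sub (w : Fin n → ℝ) (t : Fin n) :
    softmax w t = (∑ m, Real.exp (w m - w t))⁻¹ := by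
  simp only [softmax, Real.exp_sub, div_eq_mul_inv, ← Finset.sum_mul, mul_inv, inv_inv]
  ring

variable {α : Type*} {L : Filter α}

lemma tendsto_softmax_of_gap {w : α → Fin n → ℝ} {t : Fin n}
    (h : ∀ m ≠ t, Tendsto (fun a => w a m - w a t) L atBot) :
    Tendsto (fun a => softmax (w a) t) L (𝓝 1) := by
  have hsum : Tendsto (fun a => ∑ m, Real.exp (w a m - w a t)) L
      (𝓝 (∑ m, if m = t then 1 else 0)) := by
    refine tendsto_finsetSum _ fun m _ => ?_
    split_ifs with hm
    · simpa [hm] using tendsto_const_nhds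
    · exact Real.tendsto_exp_atBot.comp (h m hm)
  simp only [Finset.sum_ite_eq', Finset.mem_univ, if_true] at hsum
  simpa [softmax_eq_inv_sum_exp_sub] using hsum.inv₀ one_ne_zero

lemma tendsto_softmax_of_gap_of_ne {w : α → Fin n → ℝ} {t m : Fin n}
    (h : ∀ m ≠ t, Tendsto (fun a => w a m - w a t) L atBot) (hm : m ≠ t) :
    Tendsto (fun a => softmax (w a) m) L (𝓝 0) := by
  refine squeeze_zero (fun a => softmax_nonneg _ _) (fun a => softmax_le_one_sub hm) ?_
  simpa using (tendsto_const_nhds (x := (1 : ℝ))).sub (tendsto_softmax_of_gap h)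

lemma single_sub_single_tendsto_atBot {t m : Fin n} (hm : m ≠ t) :
    Tendsto (fun H : ℝ => (Pi.single t H : Fin n → ℝ) m - (Pi.single t H : Fin n → ℝ) t)
      atTop atBot := by
  simpa [Pi.single_apply, hm] using tendsto_neg_atTop_atBot

lemma tendsto_softmax_single (t : Fin n) :
    Tendsto (fun H : ℝ => softmax (Pi.single t H) t) atTop (𝓝 1) :=
  tendsto_softmax_of_gap fun _ hm => single_sub_single_tendsto_atBot hm

lemma tendsto_softmax_single_of_ne {t m : Fin n} (hm : m ≠ t) :
    Tendsto (fun H : ℝ => softmax (Pi.single t H) m) atTop (𝓝 0) :=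
  tendsto_softmax_of_gap_of_ne (fun _ hm => single_sub_single_tendsto_atBot hm) hm

lemma smul_single_one (H : ℝ) (t : Fin n) : H • Pi.single t (1 : ℝ) = Pi.single t H := by
  rw [← Pi.single_smul', smul_eq_mul, mul_one]

/-- The second edge selector concentrates on `t₂` because its logits `(1 - p₁) p₂` subtract the
mass `p₁` that the first selector puts on `t₁ ≠ t₂`. -/
lemma tendsto_edgeLaw2_single {t₁ t₂ : Fin n} (h : t₁ ≠ t₂) :
    Tendsto (fun H : ℝ => edgeLaw2 H (Pi.single t₁ 1) (Pi.single t₂ 1) t₂) atTop (𝓝 1) := by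
  have : NeZero n := ⟨t₁.pos.ne'⟩
  set v : ℝ → Fin n → ℝ := fun H m =>
    (1 - softmax (Pi.single t₁ H) m) * softmax (Pi.single t₂ H) m with hv
  have hv_t₂ : Tendsto (fun H => v H t₂) atTop (𝓝 1) := by
    simpa using (tendsto_const_nhds.sub (tendsto_softmax_single_of_ne h.symm)).mul
      (tendsto_softmax_single t₂)
  have hv_ne : ∀ m ≠ t₂, Tendsto (fun H => v H m) atTop (𝓝 0) := fun m hm =>
    squeeze_zero
      (fun H => mul_nonneg (sub_nonneg.2 (softmax_le_one _ _)) (softmax_nonneg _ _))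
      (fun H => mul_le_of_le_one_left (softmax_nonneg _ _)
        (sub_le_self _ (softmax_nonneg _ _)))
      (tendsto_softmax_single_of_ne hm)
  simp only [edgeLaw2, smul_single_one]
  refine tendsto_softmax_of_gap fun m hm => ?_
  have := tendsto_id.atTop_mul_neg (by norm_num) ((hv_ne m hm).sub hv_t₂)
  simpa [hv, mul_sub] using this

end Softmax

section Selections

variable {n : ℕ}

lemma liftDecode_bijective {Bin : ℕ} : Function.Bijective (liftDecode (Bin := Bin)) := by
  refine (Fintype.bijective_iff_injective_and_card _).2 ⟨fun j₁ j₂ h => ?_, by simp [mul_comm]⟩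
  unfold liftDecode at h
  split_ifs at h <;>
    simp only [Prod.mk.injEq, Fin.mk.injEq, Bool.false_eq_true, Bool.true_eq_false,
      and_false] at h <;>
    exact Fin.ext (by omega)

noncomputable def liftEquiv {Bin : ℕ} : Fin (2 * Bin) ≃ Fin Bin × Bool :=
  Equiv.ofBijective _ liftDecode_bijective

noncomputable def softmaxPMF [NeZero n] (w : Fin n → ℝ) : PMF (Fin n) :=
  PMF.ofFintype (fun j => ENNReal.ofReal (softmax w j)) (by
    rw [← ENNReal.ofReal_sum_of_nonneg fun j _ => softmax_nonneg w j, sum_softmax,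
      ENNReal.ofReal_one])

lemma MeasureTheory.MeasurePreserving.measure_eq_softmax [NeZero n] {Ω : Type*}
    [MeasurableSpace Ω] {μ : Measure Ω} {w : Fin n → ℝ} {X : Ω → Fin n}
    (hX : MeasurePreserving X μ (softmaxPMF w).toMeasure) (a : Fin n) :
    μ {ω | X ω = a} = ENNReal.ofReal (softmax w a) := by
  rw [show {ω | X ω = a} = X ⁻¹' {a} from rfl,
    hX.measure_preimage (measurableSet_singleton a).nullMeasurableSet,
    PMF.toMeasure_apply_singleton _ _ (measurableSet_singleton a)]
  simp [softmaxPMF]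

lemma measure_ne_le_of_softmax_law {Ω : Type*} [MeasurableSpace Ω] (μ : Measure Ω)
    {X : Ω → Fin n} {w : Fin n → ℝ} (hX : ∀ a, μ {ω | X ω = a} = ENNReal.ofReal (softmax w a))
    (a : Fin n) : μ {ω | X ω ≠ a} ≤ ENNReal.ofReal (1 - softmax w a) := by
  have hcover : {ω | X ω ≠ a} = ⋃ b ∈ Finset.univ.erase a, {ω | X ω = b} := by ext; simp
  calc μ {ω | X ω ≠ a} ≤ ∑ b ∈ Finset.univ.erase a, μ {ω | X ω = b} :=
        hcover ▸ measure_biUnion_finset_le _ _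
    _ = ENNReal.ofReal (∑ b ∈ Finset.univ.erase a, softmax w b) := by
        rw [ENNReal.ofReal_sum_of_nonneg fun b _ => softmax_nonneg w b]
        exact Finset.sum_congr rfl fun b _ => hX b
    _ = ENNReal.ofReal (1 - softmax w a) := by rw [sum_erase_softmax]

end Selections

namespace SBC

variable {Bin D : ℕ} {B : ℕ → ℕ}

theorem exists_of_params (hBin : 0 < Bin) (hB : ∀ l, 0 < B l) (η : ℝ)
    (Wlift : Fin (B 1) → Fin (2 * Bin) → ℝ)
    (W1 W2 : (l : ℕ) → Fin (B (l + 2)) → Fin (B (l + 1)) → ℝ)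
    (Wgate : (l : ℕ) → Fin (B (l + 2)) → Fin 16 → ℝ) :
    ∃ (Ω : Type) (_ : MeasureSpace Ω) (_ : IsProbabilityMeasure (ℙ : Measure Ω))
      (M : SBC Ω Bin D B),
      M.η = η ∧ M.Wlift = Wlift ∧ M.W1 = W1 ∧ M.W2 = W2 ∧ M.Wgate = Wgate := by
  have : NeZero (2 * Bin) := ⟨by omega⟩
  have : ∀ l, NeZero (B l) := fun l => ⟨(hB l).ne'⟩
  let ν1 (l : ℕ) := Measure.pi fun k => (softmaxPMF (η • W1 l k)).toMeasure
  let ν2 (l : ℕ) := Measure.pi fun k => (softmaxPMF fun m =>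
    η * ((1 - softmax (η • W1 l k) m) * softmax (η • W2 l k) m)).toMeasure
  let νG (l : ℕ) := Measure.pi fun k => (softmaxPMF (Wgate l k)).toMeasure
  let P := (Measure.pi fun i => (softmaxPMF (Wlift i)).toMeasure).prod
    ((Measure.infinitePi ν1).prod ((Measure.infinitePi ν2).prod (Measure.infinitePi νG)))
  let mP : MeasureSpace _ := ⟨P⟩
  refine ⟨_, mP, inferInstanceAs (IsProbabilityMeasure P),
    { η, Wlift, W1, W2, Wgate
      Lift := fun ω i => liftEquiv (ω.1 i)
      Edge1 := fun ω => ω.2.1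
      Edge2 := fun ω => ω.2.2.1
      Gate := fun ω => ω.2.2.2
      lift_law := fun i j => ?_
      edge1_law := fun l _ k m => ?_
      edge2_law := fun l _ k m => ?_
      gate_law := fun l _ k m => ?_ }, rfl, rfl, rfl, rfl, rfl⟩
  · rw [show liftDecode j = liftEquiv j from rfl]
    simp only [Equiv.apply_eq_iff_eq]
    exact ((measurePreserving_eval _ i).comp measurePreserving_fst).measure_eq_softmax j
  · exact ((measurePreserving_eval _ k).comp ((measurePreserving_eval_infinitePi ν1 l).comp
      (measurePreserving_fst.comp measurePreserving_snd))).measure_eq_softmax m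
  · exact ((measurePreserving_eval _ k).comp ((measurePreserving_eval_infinitePi ν2 l).comp
      (measurePreserving_fst.comp (measurePreserving_snd.comp
        measurePreserving_snd)))).measure_eq_softmax m
  · exact ((measurePreserving_eval _ k).comp ((measurePreserving_eval_infinitePi νG l).comp
      (measurePreserving_snd.comp (measurePreserving_snd.comp
        measurePreserving_snd)))).measure_eq_softmax m

noncomputable def failureBound (C : BoolCircuit Bin B) (D : ℕ) (η : ℝ)
    (Wlift : Fin (B 1) → Fin (2 * Bin) → ℝ)
    (W1 W2 : (l : ℕ) → Fin (B (l + 2)) → Fin (B (l + 1)) → ℝ)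
    (Wgate : (l : ℕ) → Fin (B (l + 2)) → Fin 16 → ℝ) : ENNReal :=
  ∑ i, ENNReal.ofReal (1 - softmax (Wlift i) (liftEquiv.symm (C.lift i))) +
    ∑ l : Fin D, ∑ k,
      (ENNReal.ofReal (1 - softmax (η • W1 l k) (C.edge1 l k)) +
        ENNReal.ofReal (1 - edgeLaw2 η (W1 l k) (W2 l k) (C.edge2 l k)) +
        ENNReal.ofReal (1 - softmax (Wgate l k) (C.gate l k)))

section Realization

variable {Ω : Type*} [MeasureSpace Ω] (M : SBC Ω Bin D B) (C : BoolCircuit Bin B)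

def Realizes (ω : Ω) : Prop :=
  (∀ i, M.Lift ω i = C.lift i) ∧ ∀ l < D, ∀ k,
    M.Edge1 ω l k = C.edge1 l k ∧ M.Edge2 ω l k = C.edge2 l k ∧ M.Gate ω l k = C.gate l k

variable {M C}

lemma val_eq_of_realizes {ω : Ω} (h : M.Realizes C ω) (x : Fin Bin → Bool) :
    ∀ l ≤ D, M.val ω x l = C.val x l
  | 0, _ => funext fun i => by simp only [SBC.val, BoolCircuit.val, h.1 i]
  | l + 1, hl => funext fun k => by
    obtain ⟨h₁, h₂, hγ⟩ := h.2 l (by omega) k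
    simp only [SBC.val, BoolCircuit.val, h₁, h₂, hγ, val_eq_of_realizes h x l (by omega)]

lemma out_eq_of_realizes (h1 : B (D + 1) = 1) {ω : Ω} (h : M.Realizes C ω)
    (x : Fin Bin → Bool) : M.out h1 ω x = C.out D h1 x :=
  congrFun (val_eq_of_realizes h x D le_rfl) _

lemma measure_lift_ne_le (i : Fin (B 1)) (c : Fin Bin × Bool) :
    ℙ {ω | M.Lift ω i ≠ c} ≤ ENNReal.ofReal (1 - softmax (M.Wlift i) (liftEquiv.symm c)) := by
  have hne : ∀ ω, M.Lift ω i ≠ c ↔ liftEquiv.symm (M.Lift ω i) ≠ liftEquiv.symm c :=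
    fun ω => liftEquiv.symm.injective.ne_iff.symm
  simp only [hne]
  refine measure_ne_le_of_softmax_law _ (fun a => ?_) _
  simp only [Equiv.symm_apply_eq]
  exact M.lift_law i a

lemma measure_not_realizes_le :
    ℙ {ω | ¬ M.Realizes C ω} ≤ failureBound C D M.η M.Wlift M.W1 M.W2 M.Wgate := by
  have hcover : {ω | ¬ M.Realizes C ω} ⊆ (⋃ i, {ω | M.Lift ω i ≠ C.lift i}) ∪
      ⋃ (l : Fin D) (k), ({ω | M.Edge1 ω l k ≠ C.edge1 l k} ∪
        {ω | M.Edge2 ω l k ≠ C.edge2 l k} ∪ {ω | M.Gate ω l k ≠ C.gate l k}) := by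
    intro ω hω
    by_contra hmiss
    simp only [Set.mem_union, Set.mem_iUnion, Set.mem_ofPred_eq, not_or, not_exists,
      not_not] at hmiss
    exact hω ⟨hmiss.1, fun l hl k => and_assoc.1 (hmiss.2 ⟨l, hl⟩ k)⟩
  refine (measure_mono hcover).trans <| (measure_union_le _ _).trans <| add_le_add
    ((measure_iUnion_fintype_le _ _).trans <| Finset.sum_le_sum fun i _ =>
      measure_lift_ne_le i _)
    ((measure_iUnion_fintype_le _ _).trans <| Finset.sum_le_sum fun l _ =>
      (measure_iUnion_fintype_le _ _).trans <| Finset.sum_le_sum fun k _ => ?_)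
  have hl : l.val + 2 ≤ D + 1 := by omega
  refine (measure_union_le _ _).trans <| add_le_add
    ((measure_union_le _ _).trans <| add_le_add ?_ ?_) ?_
  · exact measure_ne_le_of_softmax_law _ (M.edge1_law l hl k) _
  · exact measure_ne_le_of_softmax_law _ (M.edge2_law l hl k) _
  · exact measure_ne_le_of_softmax_law _ (M.gate_law l hl k) _

end Realization

/-- Logit `H` on every choice of `C`; the edge weights stay one-hot because the temperature
`η = H` already scales them. -/
lemma tendsto_failureBound_sharp (C : BoolCircuit Bin B)
    (hne : ∀ l < D, ∀ k, C.edge1 l k ≠ C.edge2 l k) :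
    Tendsto (fun H : ℝ => failureBound C D H (fun i => Pi.single (liftEquiv.symm (C.lift i)) H)
      (fun l k => Pi.single (C.edge1 l k) 1) (fun l k => Pi.single (C.edge2 l k) 1)
      (fun l k => Pi.single (C.gate l k) H)) atTop (𝓝 0) := by
  have miss {p : ℝ → ℝ} (hp : Tendsto p atTop (𝓝 1)) :
      Tendsto (fun H => ENNReal.ofReal (1 - p H)) atTop (𝓝 0) := by
    simpa using ENNReal.tendsto_ofReal ((tendsto_const_nhds (x := (1 : ℝ))).sub hp)
  simp only [failureBound]
  rw [show (0 : ENNReal) = ∑ _i : Fin (B 1), 0 + ∑ l : Fin D, ∑ _k : Fin (B (l + 2)), (0 + 0 + 0)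
    by simp]
  refine (tendsto_finsetSum _ fun i _ => miss (tendsto_softmax_single _)).add
    (tendsto_finsetSum _ fun l _ => tendsto_finsetSum _ fun k _ =>
      ((miss ?_).add (miss (tendsto_edgeLaw2_single (hne l l.2 k)))).add
        (miss (tendsto_softmax_single _)))
  simpa only [smul_single_one] using tendsto_softmax_single _

theorem exists_realizes (hBin : 0 < Bin) (hB : ∀ l, 0 < B l) (C : BoolCircuit Bin B)
    (hne : ∀ l < D, ∀ k, C.edge1 l k ≠ C.edge2 l k) {δ : ℝ} (hδ : 0 < δ) :
    ∃ (Ω : Type) (_ : MeasureSpace Ω) (_ : IsProbabilityMeasure (ℙ : Measure Ω))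
      (M : SBC Ω Bin D B), ENNReal.ofReal (1 - δ) ≤ ℙ {ω | M.Realizes C ω} := by
  obtain ⟨H, hH⟩ := ((tendsto_failureBound_sharp C hne).eventually
    (gt_mem_nhds (ENNReal.ofReal_pos.2 hδ))).exists
  obtain ⟨Ω, _, hP, M, hη, hL, h₁, h₂, hγ⟩ := exists_of_params (D := D) hBin hB H
    (fun i => Pi.single (liftEquiv.symm (C.lift i)) H) (fun l k => Pi.single (C.edge1 l k) 1)
    (fun l k => Pi.single (C.edge2 l k) 1) (fun l k => Pi.single (C.gate l k) H)
  refine ⟨Ω, _, hP, M, ?_⟩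
  have hmiss := M.measure_not_realizes_le (C := C)
  rw [hη, hL, h₁, h₂, hγ] at hmiss
  calc ENNReal.ofReal (1 - δ) = 1 - ENNReal.ofReal δ := by
        rw [ENNReal.ofReal_sub _ hδ.le, ENNReal.ofReal_one]
    _ ≤ 1 - ℙ {ω | ¬ M.Realizes C ω} := tsub_le_tsub_left (hmiss.trans hH.le) 1
    _ ≤ ℙ {ω | M.Realizes C ω} := by
        rw [tsub_le_iff_right, ← measure_univ (μ := (ℙ : Measure Ω))]
        exact measure_univ_le_add_compl _

end SBC

theorem UniversalReasoning_general
    (Bin : ℕ) (hBin : 0 < Bin) (f : (Fin Bin → Bool) → Bool)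
    (δ : ℝ) (hδ0 : 0 < δ) :
    ∃ (Ω : Type) (_ : MeasureSpace Ω) (_ : IsProbabilityMeasure (ℙ : Measure Ω))
      (D : ℕ) (B : ℕ → ℕ) (h1 : B (D + 1) = 1) (M : SBC Ω Bin D B),
      ENNReal.ofReal (1 - δ) ≤ ℙ {ω | ∀ x, M.out h1 ω x = f x} := by
  obtain ⟨D, B, h1, C, hB, hne, hC⟩ := exists_boolCircuit hBin f
  obtain ⟨Ω, _, hP, M, hM⟩ := SBC.exists_realizes hBin hB C hne hδ0
  refine ⟨Ω, _, hP, D, B, h1, M, hM.trans (measure_mono fun ω hω x => ?_)⟩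
  exact (SBC.out_eq_of_realizes h1 hω x).trans (hC x)

/-- **Universal Boolean Reasoning.** For every Boolean function
`f : {0,1}^{B_in} → {0,1}` and every failure probability `0 < δ ≤ 1`, there is
a Stochastic Boolean Circuit `𝐂̂` — i.e. a probability space, a depth
`Δ = D + 1`, layer widths `B 1, …, B (D+1) = 1`, and a choice of all trainable
parameters of the SBC model — such that
`ℙ( 𝐂̂(x) = f(x) for all x ) ≥ 1 − δ`. -/
theorem UniversalReasoning
    (Bin : ℕ) (hBin : 0 < Bin) (f : (Fin Bin → Bool) → Bool)
    (δ : ℝ) (hδ0 : 0 < δ) (hδ1 : δ ≤ 1) :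
    ∃ (Ω : Type) (_ : MeasureSpace Ω) (_ : IsProbabilityMeasure (ℙ : Measure Ω))
      (D : ℕ) (B : ℕ → ℕ) (h1 : B (D + 1) = 1) (M : SBC Ω Bin D B),
      ENNReal.ofReal (1 - δ) ≤ ℙ {ω | ∀ x, M.out h1 ω x = f x} :=
  UniversalReasoning_general Bin hBin f δ hδ0
end

section
/- Edge-Selector Properties (Proposition 'Good_Properties_Uncrossable'): Let B ∈ ℕ₊ and for η > 0 define S_η : ℝ^B × ℝ^B → ℝ^B × ℝ^B by S_η(W_1, W_2) = ( SM(ηW_1), SM( η(1 − SM(ηW_1)) ⊙ SM(ηW_2) ) ), where ⊙ is the componentwise product and SM is the softmax on ℝ^B. Then for all η > 0: (i) the range of S_η is contained in Δ̇_B × Δ̇_B (the relative interior of the simplex squared); (ii) S_η is C^∞-smooth. Furthermore, for every 0 < ε < 1/2 there exists a temperature threshold η_ε > 0 such that for each i ∈ [B]₊: (iii) (no doubled edges) sup over W_2 ∈ ℝ^B for which some coordinate j ≠ i satisfies (W_2)_j > (W_2)_i of the i-th coordinate of the second output S_{η_ε}(e_i, W_2) lies in [0, ε]; and (iv) (recovery)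 for every j ∈ [B]₊ with j ≠ i, ‖ S_{η_ε}(e_i, e_j) − (e_i, e_j) ‖₁ < ε. In particular, if (𝐄_{i:1}, 𝐄_{i:2}) is a pair of random one-hot vectors in {e_1,…,e_B}² whose means are S_{η_ε}(e_i, e_j), then ℙ( (𝐄_{i:1}, 𝐄_{i:2}) = (e_i, e_j) ) ≥ 1 − ε. -/
/-!
Statement 4: Edge-Selector Properties (Proposition `Good_Properties_Uncrossable`).
-/

open MeasureTheory ProbabilityTheory

/-- First component of the edge selector: `SM(ηW₁)`. -/
noncomputable def Sfst {B : ℕ} (η : ℝ) (W1 : Fin B → ℝ) : Fin B → ℝ :=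
  softmax (η • W1)

/-- Second component of the edge selector: `SM(η(1 − SM(ηW₁)) ⊙ SM(ηW₂))`. -/
noncomputable def Ssnd {B : ℕ} (η : ℝ) (W1 W2 : Fin B → ℝ) : Fin B → ℝ :=
  softmax (fun m => η * ((1 - softmax (η • W1) m) * softmax (η • W2) m))

/-- The edge selector `S_η(W₁, W₂) = (SM(ηW₁), SM(η(1 − SM(ηW₁)) ⊙ SM(ηW₂)))`. -/
noncomputable def Sel {B : ℕ} (η : ℝ) (p : (Fin B → ℝ) × (Fin B → ℝ)) :
    (Fin B → ℝ) × (Fin B → ℝ) :=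
  (Sfst η p.1, Ssnd η p.1 p.2)

section Helpers
variable {B : ℕ}

lemma exp_sum_pos (hB : 0 < B) (w : Fin B → ℝ) : 0 < ∑ j, Real.exp (w j) := by
  haveI : Nonempty (Fin B) := ⟨⟨0, hB⟩⟩
  exact Finset.sum_pos (fun j _ => Real.exp_pos _) Finset.univ_nonempty

lemma softmax_pos (hB : 0 < B) (w : Fin B → ℝ) (m : Fin B) : 0 < softmax w m :=
  div_pos (Real.exp_pos _) (exp_sum_pos hB w)

lemma softmax_sum (hB : 0 < B) (w : Fin B → ℝ) : ∑ m, softmax w m = 1 := by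
  unfold softmax
  rw [← Finset.sum_div]
  exact div_self (exp_sum_pos hB w).ne'

lemma softmax_le_one_s4 (w : Fin B → ℝ) (m : Fin B) : softmax w m ≤ 1 := by
  have h := Finset.single_le_sum (f := fun j => Real.exp (w j))
    (fun j _ => (Real.exp_pos (w j)).le) (Finset.mem_univ m)
  exact div_le_one_of_le₀ h (Finset.sum_nonneg fun j _ => (Real.exp_pos (w j)).le)

lemma softmax_le_exp_sub (w : Fin B → ℝ) (k m : Fin B) :
    softmax w m ≤ Real.exp (w m - w k) := by
  rw [Real.exp_sub]
  exact div_le_div_of_nonneg_left (Real.exp_pos _).le (Real.exp_pos _)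
    (Finset.single_le_sum (fun j _ => (Real.exp_pos (w j)).le) (Finset.mem_univ k))

lemma exp_sum_single (η : ℝ) (i : Fin B) :
    ∑ j, Real.exp ((η • (Pi.single i 1 : Fin B → ℝ)) j) = Real.exp η + ((B:ℝ) - 1) := by
  have h : ∀ j : Fin B, Real.exp ((η • (Pi.single i 1 : Fin B → ℝ)) j)
      = (if j = i then Real.exp η - 1 else 0) + 1 := by
    intro j
    by_cases h : j = i <;> simp [h, Pi.single_apply, Real.exp_zero]
  rw [Finset.sum_congr rfl fun j _ => h j, Finset.sum_add_distrib,
    Finset.sum_ite_eq' Finset.univ i (fun _ => Real.exp η - 1)]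
  simp [Finset.card_univ]
  ring

lemma single_smul_apply (η : ℝ) (i m : Fin B) :
    (η • (Pi.single i 1 : Fin B → ℝ)) m = if m = i then η else 0 := by
  by_cases h : m = i <;> simp [h, Pi.single_apply]

lemma softmax_single_self (η : ℝ) (i : Fin B) :
    softmax (η • (Pi.single i 1 : Fin B → ℝ)) i
      = Real.exp η / (Real.exp η + ((B:ℝ) - 1)) := by
  unfold softmax
  rw [exp_sum_single, single_smul_apply]
  simp

lemma softmax_single_ne (η : ℝ) {i m : Fin B} (h : m ≠ i) :
    softmax (η • (Pi.single i 1 : Fin B → ℝ)) m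
      = 1 / (Real.exp η + ((B:ℝ) - 1)) := by
  unfold softmax
  rw [exp_sum_single, single_smul_apply]
  simp [h]

lemma tv_single (w : Fin B → ℝ) (hpos : ∀ m, 0 ≤ w m)
    (hsum : ∑ m, w m = 1) (i : Fin B) :
    ∑ m, |w m - (Pi.single i 1 : Fin B → ℝ) m| = 2 * (1 - w i) := by
  have h1 : w i ≤ 1 := hsum ▸ Finset.single_le_sum (fun m _ => hpos m) (Finset.mem_univ i)
  rw [← Finset.sum_erase_add _ _ (Finset.mem_univ i)]
  have h2 : ∀ m ∈ Finset.univ.erase i, |w m - (Pi.single i 1 : Fin B → ℝ) m| = w m := by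
    intro m hm
    rw [Pi.single_apply, if_neg (Finset.mem_erase.mp hm).1, sub_zero, abs_of_nonneg (hpos m)]
  rw [Finset.sum_congr rfl h2, Finset.sum_erase_eq_sub (Finset.mem_univ i), hsum,
    Pi.single_apply, if_pos rfl, abs_of_nonpos (by linarith)]
  ring

lemma prob_ne_le {Ω : Type*} [MeasureSpace Ω] [IsProbabilityMeasure (ℙ : Measure Ω)]
    (E : Ω → Fin B) (v : Fin B → ℝ) (hpos : ∀ k, 0 ≤ v k) (hsum : ∑ k, v k = 1)
    (hv : ∀ k, ℙ {ω | E ω = k} = ENNReal.ofReal (v k)) (i : Fin B) :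
    ℙ {ω | E ω ≠ i} ≤ ENNReal.ofReal (1 - v i) := by
  have hsub : {ω | E ω ≠ i} ⊆ ⋃ k ∈ Finset.univ.erase i, {ω | E ω = k} := by
    intro ω hω
    exact Set.mem_biUnion (Finset.mem_erase.mpr ⟨hω, Finset.mem_univ _⟩) rfl
  calc ℙ {ω | E ω ≠ i} ≤ ∑ k ∈ Finset.univ.erase i, ℙ {ω | E ω = k} :=
        (measure_mono hsub).trans (measure_biUnion_finset_le _ _)
    _ = ∑ k ∈ Finset.univ.erase i, ENNReal.ofReal (v k) :=
        Finset.sum_congr rfl fun k _ => hv k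
    _ = ENNReal.ofReal (∑ k ∈ Finset.univ.erase i, v k) :=
        (ENNReal.ofReal_sum_of_nonneg fun k _ => hpos k).symm
    _ = ENNReal.ofReal (1 - v i) := by
        rw [Finset.sum_erase_eq_sub (Finset.mem_univ i), hsum]

lemma contDiff_softmax (hB : 0 < B) : ContDiff ℝ (⊤ : ℕ∞) (softmax (n := B)) := by
  haveI : Nonempty (Fin B) := ⟨⟨0, hB⟩⟩
  apply contDiff_pi.mpr
  intro m
  apply ContDiff.div
  · exact Real.contDiff_exp.comp (contDiff_pi.mp contDiff_id m)
  · exact ContDiff.sum fun j _ => Real.contDiff_exp.comp (contDiff_pi.mp contDiff_id j)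
  · intro w
    exact (Finset.sum_pos (fun j _ => Real.exp_pos _) Finset.univ_nonempty).ne'

lemma contDiff_sel (hB : 0 < B) (η : ℝ) : ContDiff ℝ (⊤ : ℕ∞) (Sel η (B := B)) := by
  have h1 : ContDiff ℝ (⊤ : ℕ∞) (fun p : (Fin B → ℝ) × (Fin B → ℝ) => softmax (η • p.1)) :=
    (contDiff_softmax hB).comp (contDiff_fst.const_smul η)
  have h2 : ContDiff ℝ (⊤ : ℕ∞) (fun p : (Fin B → ℝ) × (Fin B → ℝ) => softmax (η • p.2)) :=
    (contDiff_softmax hB).comp (contDiff_snd.const_smul η)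
  have h3 : ContDiff ℝ (⊤ : ℕ∞) (fun p : (Fin B → ℝ) × (Fin B → ℝ) =>
      (softmax (η • p.1),
       softmax (fun m => η * ((1 - softmax (η • p.1) m) * softmax (η • p.2) m)))) := by
    apply ContDiff.prodMk h1
    apply (contDiff_softmax hB).comp
    apply contDiff_pi.mpr
    intro m
    exact contDiff_const.mul
      ((contDiff_const.sub (contDiff_pi.mp h1 m)).mul (contDiff_pi.mp h2 m))
  exact h3

end Helpers

/-- **Edge-Selector Properties.**  For all `η > 0`:
(i) the range of `S_η` lies in `Δ̇_B × Δ̇_B` (strictly positive entries, each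
row summing to 1); (ii) `S_η` is `C^∞`-smooth.  Moreover, for every
`0 < ε < 1/2` there is `η_ε > 0` such that for each `i`:
(iii) (no doubled edges) for every `W₂` having some coordinate `j ≠ i` with
`(W₂)_j > (W₂)_i`, the `i`-th coordinate of the second output of
`S_{η_ε}(e_i, W₂)` lies in `[0, ε]`; (iv) (recovery) for every `j ≠ i`,
`‖S_{η_ε}(e_i, e_j) − (e_i, e_j)‖₁ < ε`; and in particular any pair of random
one-hot vectors `(𝐄_{i:1}, 𝐄_{i:2})` with means `S_{η_ε}(e_i, e_j)` equals
`(e_i, e_j)` with probability at least `1 − ε`. -/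
theorem Good_Properties_Uncrossable
    {Ω : Type*} [MeasureSpace Ω] [IsProbabilityMeasure (ℙ : Measure Ω)]
    (B : ℕ) (hB : 0 < B) :
    (∀ η : ℝ, 0 < η →
      ((∀ W1 W2 : Fin B → ℝ,
          (∀ m, 0 < Sfst η W1 m) ∧ (∑ m, Sfst η W1 m) = 1 ∧
          (∀ m, 0 < Ssnd η W1 W2 m) ∧ (∑ m, Ssnd η W1 W2 m) = 1) ∧
        ContDiff ℝ (⊤ : ℕ∞) (Sel η (B := B)))) ∧
    (∀ ε : ℝ, 0 < ε → ε < 1 / 2 → ∃ ηε : ℝ, 0 < ηε ∧ ∀ i : Fin B,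
      (∀ W2 : Fin B → ℝ, (∃ j : Fin B, j ≠ i ∧ W2 i < W2 j) →
        0 ≤ Ssnd ηε ((Pi.single i 1 : Fin B → ℝ)) W2 i ∧ Ssnd ηε ((Pi.single i 1 : Fin B → ℝ)) W2 i ≤ ε) ∧
      (∀ j : Fin B, j ≠ i →
        ((∑ m, |Sfst ηε ((Pi.single i 1 : Fin B → ℝ)) m - (Pi.single i 1 : Fin B → ℝ) m|) +
         (∑ m, |Ssnd ηε ((Pi.single i 1 : Fin B → ℝ)) ((Pi.single j 1 : Fin B → ℝ)) m - (Pi.single j 1 : Fin B → ℝ) m|) < ε) ∧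
        (∀ E1 E2 : Ω → Fin B,
          (∀ k, ℙ {ω | E1 ω = k} = ENNReal.ofReal (Sfst ηε ((Pi.single i 1 : Fin B → ℝ)) k)) →
          (∀ k, ℙ {ω | E2 ω = k} =
              ENNReal.ofReal (Ssnd ηε ((Pi.single i 1 : Fin B → ℝ)) ((Pi.single j 1 : Fin B → ℝ)) k)) →
          ENNReal.ofReal (1 - ε) ≤ ℙ {ω | E1 ω = i ∧ E2 ω = j}))) := by
  constructor
  · intro η _
    exact ⟨fun W1 W2 => ⟨fun m => softmax_pos hB _ m, softmax_sum hB _,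
      fun m => softmax_pos hB _ m, softmax_sum hB _⟩, contDiff_sel hB η⟩
  intro ε hε hε2
  set ηε : ℝ := max (max 1 (4 * (B:ℝ))) (max (12/ε) (4 * Real.log (16 * ((B:ℝ)+1) / ε))) with hηε
  have hη1 : (1:ℝ) ≤ ηε := le_trans (le_max_left _ _) (le_max_left _ _)
  have hη2 : 4 * (B:ℝ) ≤ ηε := le_trans (le_max_right _ _) (le_max_left _ _)
  have hη3 : 12/ε ≤ ηε := le_trans (le_max_left _ _) (le_max_right _ _)
  have hη4 : 4 * Real.log (16 * ((B:ℝ)+1) / ε) ≤ ηε :=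
    le_trans (le_max_right _ _) (le_max_right _ _)
  have hpos : 0 < ηε := lt_of_lt_of_le one_pos hη1
  have hBR : (1:ℝ) ≤ (B:ℝ) := Nat.one_le_cast.mpr hB
  have hexp_ge : ηε + 1 ≤ Real.exp ηε := Real.add_one_le_exp ηε
  set D : ℝ := Real.exp ηε + ((B:ℝ) - 1) with hD
  have hDexp : Real.exp ηε ≤ D := by rw [hD]; linarith
  have hD2 : (2:ℝ) ≤ D := by rw [hD]; linarith
  have hDpos : (0:ℝ) < D := by linarith
  have hexpB : (B:ℝ) + 1 ≤ Real.exp ηε := by linarith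
  have hC3 : ηε * ((B:ℝ) - 1) ≤ Real.exp ηε := by
    have h := Real.add_one_le_exp (ηε/2)
    have hsq : Real.exp (ηε/2) * Real.exp (ηε/2) = Real.exp ηε := by
      rw [← Real.exp_add]; ring_nf
    nlinarith [h, hsq, hη2, hη1, hBR, Real.exp_pos (ηε/2)]
  clear_value ηε
  have hquarter : Real.exp (-(ηε/4)) ≤ ε / (16 * ((B:ℝ)+1)) := by
    have hx : (0:ℝ) < 16 * ((B:ℝ)+1) / ε := by positivity
    have h2 : 16 * ((B:ℝ)+1) / ε ≤ Real.exp (ηε/4) := by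
      calc 16 * ((B:ℝ)+1) / ε = Real.exp (Real.log (16 * ((B:ℝ)+1) / ε)) :=
            (Real.exp_log hx).symm
        _ ≤ Real.exp (ηε/4) := Real.exp_le_exp.mpr (by linarith)
    rw [Real.exp_neg]
    calc (Real.exp (ηε/4))⁻¹ ≤ (16 * ((B:ℝ)+1) / ε)⁻¹ := inv_anti₀ hx h2
      _ = ε / (16 * ((B:ℝ)+1)) := by rw [inv_div]
  clear_value D
  refine ⟨ηε, hpos, fun i => ?_⟩
  have hsi : softmax (ηε • (Pi.single i 1 : Fin B → ℝ)) i = Real.exp ηε / D := by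
    rw [softmax_single_self, ← hD]
  have hsm : ∀ m : Fin B, m ≠ i → softmax (ηε • (Pi.single i 1 : Fin B → ℝ)) m = 1 / D := by
    intro m hm; rw [softmax_single_ne ηε hm, ← hD]
  have h1si : 1 - softmax (ηε • (Pi.single i 1 : Fin B → ℝ)) i = ((B:ℝ) - 1) / D := by
    rw [hsi]
    field_simp
    rw [hD]; ring
  have hsmhalf : ∀ m : Fin B, m ≠ i →
      (1:ℝ)/2 ≤ 1 - softmax (ηε • (Pi.single i 1 : Fin B → ℝ)) m := by
    intro m hm
    rw [hsm m hm]
    have : (1:ℝ)/D ≤ 1/2 := by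
      apply div_le_div_of_nonneg_left one_pos.le two_pos hD2
    linarith
  constructor
  · -- (iii)
    rintro W2 ⟨j, hji, hlt⟩
    set t : Fin B → ℝ := softmax (ηε • W2) with ht
    set f : Fin B → ℝ :=
      fun m => ηε * ((1 - softmax (ηε • (Pi.single i 1 : Fin B → ℝ)) m) * t m) with hf
    have hSsnd : Ssnd ηε (Pi.single i 1 : Fin B → ℝ) W2 = softmax f := rfl
    have htpos : ∀ m, 0 < t m := fun m => softmax_pos hB _ m
    have hti1 : t i ≤ 1 := softmax_le_one_s4 _ i
    clear_value t f
    have htlt : t i < t j := by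
      rw [ht]
      unfold softmax
      apply (div_lt_div_iff_of_pos_right (exp_sum_pos hB _)).mpr
      apply Real.exp_lt_exp.mpr
      simp only [Pi.smul_apply, smul_eq_mul]
      exact mul_lt_mul_of_pos_left hlt hpos
    have hti : t i ≤ 1/2 := by
      have hj' : t j ≤ ∑ m ∈ Finset.univ.erase i, t m :=
        Finset.single_le_sum (fun m _ => (htpos m).le)
          (Finset.mem_erase.mpr ⟨hji, Finset.mem_univ j⟩)
      have hsum' : ∑ m ∈ Finset.univ.erase i, t m = 1 - t i := by
        rw [Finset.sum_erase_eq_sub (Finset.mem_univ i), ht, softmax_sum hB]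
      linarith
    have hfnonneg : ∀ m, 0 ≤ f m := by
      intro m
      simp only [hf]
      have := softmax_le_one_s4 (ηε • (Pi.single i 1 : Fin B → ℝ)) m
      exact mul_nonneg hpos.le (mul_nonneg (by linarith) (htpos m).le)
    have hfi : f i ≤ 1 := by
      have hBD : (0:ℝ) ≤ ((B:ℝ) - 1) / D := div_nonneg (by linarith) hDpos.le
      calc f i = ηε * ((((B:ℝ) - 1) / D) * t i) := by simp only [hf]; rw [h1si]
        _ ≤ ηε * ((((B:ℝ) - 1) / D) * 1) := by
            apply mul_le_mul_of_nonneg_left (mul_le_mul_of_nonneg_left hti1 hBD) hpos.le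
        _ = ηε * ((B:ℝ) - 1) / D := by ring
        _ ≤ ηε * ((B:ℝ) - 1) / Real.exp ηε :=
            div_le_div_of_nonneg_left (mul_nonneg hpos.le (by linarith)) (Real.exp_pos _) hDexp
        _ ≤ 1 := by rw [div_le_one (Real.exp_pos _)]; exact hC3
    have hden : ηε/4 ≤ ∑ m, Real.exp (f m) := by
      have h1 : ∑ m, (f m + 1) ≤ ∑ m, Real.exp (f m) :=
        Finset.sum_le_sum fun m _ => Real.add_one_le_exp (f m)
      have h2 : ∑ m, (f m + 1) = (∑ m, f m) + (B:ℝ) := by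
        rw [Finset.sum_add_distrib]
        simp [Finset.card_univ]
      have h3 : ∑ m ∈ Finset.univ.erase i, f m ≤ ∑ m, f m :=
        Finset.sum_le_sum_of_subset_of_nonneg (Finset.subset_univ _)
          (fun m _ _ => hfnonneg m)
      have h4 : ∀ m ∈ Finset.univ.erase i, ηε/2 * t m ≤ f m := by
        intro m hm
        have hh := hsmhalf m (Finset.mem_erase.mp hm).1
        simp only [hf]
        have h' : (1:ℝ)/2 * t m ≤ (1 - softmax (ηε • (Pi.single i 1 : Fin B → ℝ)) m) * t m :=
          mul_le_mul_of_nonneg_right hh (htpos m).le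
        calc ηε/2 * t m = ηε * (1/2 * t m) := by ring
          _ ≤ ηε * ((1 - softmax (ηε • (Pi.single i 1 : Fin B → ℝ)) m) * t m) :=
            mul_le_mul_of_nonneg_left h' hpos.le
      have h5 : ∑ m ∈ Finset.univ.erase i, (ηε/2 * t m) ≤ ∑ m ∈ Finset.univ.erase i, f m :=
        Finset.sum_le_sum h4
      have h6 : ∑ m ∈ Finset.univ.erase i, (ηε/2 * t m) = ηε/2 * (1 - t i) := by
        rw [← Finset.mul_sum, Finset.sum_erase_eq_sub (Finset.mem_univ i), ht, softmax_sum hB]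
      have h7 : ηε/4 ≤ ηε/2 * (1 - t i) := by
        calc ηε/4 = ηε/2 * (1/2) := by ring
          _ ≤ ηε/2 * (1 - t i) := mul_le_mul_of_nonneg_left (by linarith) (by linarith)
      have hBpos : (0:ℝ) ≤ (B:ℝ) := by positivity
      linarith
    constructor
    · rw [hSsnd]; exact (softmax_pos hB f i).le
    · rw [hSsnd]
      have hnum : Real.exp (f i) ≤ 3 := by
        calc Real.exp (f i) ≤ Real.exp 1 := Real.exp_le_exp.mpr hfi
          _ ≤ 3 := by linarith [Real.exp_one_lt_d9.le]
      have hdpos : (0:ℝ) < ηε/4 := by linarith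
      calc softmax f i = Real.exp (f i) / ∑ m, Real.exp (f m) := rfl
        _ ≤ 3 / (ηε/4) := div_le_div₀ (by norm_num) hnum hdpos hden
        _ = 12 / ηε := by rw [div_div_eq_mul_div]; ring_nf
        _ ≤ ε := by
            rw [div_le_iff₀ hpos]
            have := (div_le_iff₀ hε).mp hη3
            linarith
  · -- (iv)
    intro j hj
    have htj : softmax (ηε • (Pi.single j 1 : Fin B → ℝ)) j = Real.exp ηε / D := by
      rw [softmax_single_self, ← hD]
    have htm : ∀ m : Fin B, m ≠ j → softmax (ηε • (Pi.single j 1 : Fin B → ℝ)) m = 1 / D := by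
      intro m hm; rw [softmax_single_ne ηε hm, ← hD]
    set f : Fin B → ℝ := fun m => ηε * ((1 - softmax (ηε • (Pi.single i 1 : Fin B → ℝ)) m) *
      softmax (ηε • (Pi.single j 1 : Fin B → ℝ)) m) with hf
    have hSsnd : Ssnd ηε (Pi.single i 1 : Fin B → ℝ) (Pi.single j 1 : Fin B → ℝ) = softmax f := rfl
    have hSfst : Sfst ηε (Pi.single i 1 : Fin B → ℝ) = softmax (ηε • (Pi.single i 1 : Fin B → ℝ)) := rfl
    clear_value f
    -- bound on 1 - s i
    have hsib : 1 - softmax (ηε • (Pi.single i 1 : Fin B → ℝ)) i ≤ ε/16 := by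
      rw [h1si]
      have step1 : ((B:ℝ) - 1) / D ≤ ((B:ℝ)+1) / Real.exp (ηε/4) := by
        apply div_le_div₀ (by positivity) (by linarith) (Real.exp_pos _)
        calc Real.exp (ηε/4) ≤ Real.exp ηε := Real.exp_le_exp.mpr (by linarith)
          _ ≤ D := hDexp
      have step2 : ((B:ℝ)+1) / Real.exp (ηε/4) = ((B:ℝ)+1) * Real.exp (-(ηε/4)) := by
        rw [Real.exp_neg, div_eq_mul_inv]
      have step3 : ((B:ℝ)+1) * Real.exp (-(ηε/4)) ≤ ((B:ℝ)+1) * (ε / (16 * ((B:ℝ)+1))) :=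
        mul_le_mul_of_nonneg_left hquarter (by positivity)
      have step4 : ((B:ℝ)+1) * (ε / (16 * ((B:ℝ)+1))) = ε/16 := by
        field_simp
      linarith [step1, step2 ▸ step3]
    -- f bounds
    have hfm1 : ∀ m : Fin B, m ≠ j → f m ≤ 1 := by
      intro m hm
      have hsm0 : 0 ≤ softmax (ηε • (Pi.single i 1 : Fin B → ℝ)) m := (softmax_pos hB _ m).le
      calc f m = ηε * ((1 - softmax (ηε • (Pi.single i 1 : Fin B → ℝ)) m) * (1/D)) := by
            simp only [hf]; rw [htm m hm]
        _ ≤ ηε * (1 * (1/D)) := by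
            apply mul_le_mul_of_nonneg_left
              (mul_le_mul_of_nonneg_right (by linarith) (by positivity)) hpos.le
        _ = ηε / D := by ring
        _ ≤ ηε / Real.exp ηε := div_le_div_of_nonneg_left hpos.le (Real.exp_pos _) hDexp
        _ ≤ 1 := by rw [div_le_one (Real.exp_pos _)]; linarith
    have hfj : ηε/4 ≤ f j := by
      have hsj : softmax (ηε • (Pi.single i 1 : Fin B → ℝ)) j = 1 / D := hsm j hj
      have hsjb : (1:ℝ)/2 ≤ 1 - softmax (ηε • (Pi.single i 1 : Fin B → ℝ)) j := hsmhalf j hj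
      have htjb : (1:ℝ)/2 ≤ softmax (ηε • (Pi.single j 1 : Fin B → ℝ)) j := by
        rw [htj, le_div_iff₀ hDpos, hD]
        linarith
      have htj1 : softmax (ηε • (Pi.single j 1 : Fin B → ℝ)) j ≤ 1 := softmax_le_one_s4 _ j
      have hfj' : f j = ηε * ((1 - softmax (ηε • (Pi.single i 1 : Fin B → ℝ)) j) *
        softmax (ηε • (Pi.single j 1 : Fin B → ℝ)) j) := by simp only [hf]
      rw [hfj']
      have hx : (1:ℝ)/2 * (1/2) ≤ (1 - softmax (ηε • (Pi.single i 1 : Fin B → ℝ)) j) *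
          softmax (ηε • (Pi.single j 1 : Fin B → ℝ)) j :=
        mul_le_mul hsjb htjb (by norm_num) (by linarith)
      calc ηε/4 = ηε * (1/2 * (1/2)) := by ring
        _ ≤ _ := mul_le_mul_of_nonneg_left hx hpos.le
    have hujb : 1 - softmax f j ≤ 3 * ε / 16 := by
      have hum : ∀ m : Fin B, m ≠ j → softmax f m ≤ 3 * (ε / (16 * ((B:ℝ)+1))) := by
        intro m hm
        calc softmax f m ≤ Real.exp (f m - f j) := softmax_le_exp_sub f j m
          _ ≤ Real.exp (1 - ηε/4) := Real.exp_le_exp.mpr (by linarith [hfm1 m hm])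
          _ = Real.exp 1 * Real.exp (-(ηε/4)) := by rw [← Real.exp_add]; ring_nf
          _ ≤ 3 * (ε / (16 * ((B:ℝ)+1))) := by
              apply mul_le_mul (by linarith [Real.exp_one_lt_d9.le]) hquarter
                (Real.exp_pos _).le (by norm_num)
      have hsum' : ∑ m ∈ Finset.univ.erase j, softmax f m = 1 - softmax f j := by
        rw [Finset.sum_erase_eq_sub (Finset.mem_univ j), softmax_sum hB]
      have hcard : ((Finset.univ.erase j).card : ℝ) ≤ (B:ℝ) + 1 := by
        rw [Finset.card_erase_of_mem (Finset.mem_univ j), Finset.card_univ, Fintype.card_fin]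
        have : ((B - 1 : ℕ) : ℝ) ≤ (B:ℝ) := Nat.cast_le.mpr (Nat.sub_le B 1)
        linarith
      have hbd : ∑ m ∈ Finset.univ.erase j, softmax f m
          ≤ ((Finset.univ.erase j).card : ℝ) * (3 * (ε / (16 * ((B:ℝ)+1)))) := by
        have := Finset.sum_le_card_nsmul (Finset.univ.erase j) (softmax f)
          (3 * (ε / (16 * ((B:ℝ)+1))))
          (fun m hm => hum m (Finset.mem_erase.mp hm).1)
        simpa [nsmul_eq_mul] using this
      have hfinal : ((Finset.univ.erase j).card : ℝ) * (3 * (ε / (16 * ((B:ℝ)+1))))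
          ≤ 3 * ε / 16 := by
        have hb : (0:ℝ) ≤ 3 * (ε / (16 * ((B:ℝ)+1))) := by positivity
        calc ((Finset.univ.erase j).card : ℝ) * (3 * (ε / (16 * ((B:ℝ)+1))))
            ≤ ((B:ℝ)+1) * (3 * (ε / (16 * ((B:ℝ)+1)))) := mul_le_mul_of_nonneg_right hcard hb
          _ = 3 * ε / 16 := by field_simp
      linarith
    have hsile : softmax (ηε • (Pi.single i 1 : Fin B → ℝ)) i ≤ 1 := softmax_le_one_s4 _ i
    have hujle : softmax f j ≤ 1 := softmax_le_one_s4 _ j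
    constructor
    · -- ℓ¹ bound
      rw [hSfst, hSsnd]
      rw [tv_single _ (fun m => (softmax_pos hB _ m).le) (softmax_sum hB _) i,
        tv_single _ (fun m => (softmax_pos hB _ m).le) (softmax_sum hB _) j]
      linarith [hsib, hujb, hε]
    · -- probability
      intro E1 E2 hE1 hE2
      have hP1 : ℙ {ω | E1 ω ≠ i} ≤ ENNReal.ofReal (1 - Sfst ηε (Pi.single i 1 : Fin B → ℝ) i) :=
        prob_ne_le E1 _ (fun k => (softmax_pos hB _ k).le) (softmax_sum hB _) hE1 i
      have hP2 : ℙ {ω | E2 ω ≠ j} ≤ ENNReal.ofReal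
          (1 - Ssnd ηε (Pi.single i 1 : Fin B → ℝ) (Pi.single j 1 : Fin B → ℝ) j) :=
        prob_ne_le E2 _ (fun k => (softmax_pos hB _ k).le) (softmax_sum hB _) hE2 j
      set A : Set Ω := {ω | E1 ω = i ∧ E2 ω = j} with hA
      have hsub : Aᶜ ⊆ {ω | E1 ω ≠ i} ∪ {ω | E2 ω ≠ j} := by
        intro ω hω
        rcases not_and_or.mp hω with h | h
        · exact Or.inl h
        · exact Or.inr h
      have hd1 : (0:ℝ) ≤ 1 - Sfst ηε (Pi.single i 1 : Fin B → ℝ) i := by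
        rw [hSfst]; linarith
      have hd2 : (0:ℝ) ≤ 1 - Ssnd ηε (Pi.single i 1 : Fin B → ℝ) (Pi.single j 1 : Fin B → ℝ) j := by
        rw [hSsnd]; linarith
      have hAc : ℙ Aᶜ ≤ ENNReal.ofReal ((1 - Sfst ηε (Pi.single i 1 : Fin B → ℝ) i) +
          (1 - Ssnd ηε (Pi.single i 1 : Fin B → ℝ) (Pi.single j 1 : Fin B → ℝ) j)) := by
        calc ℙ Aᶜ ≤ ℙ ({ω | E1 ω ≠ i} ∪ {ω | E2 ω ≠ j}) := measure_mono hsub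
          _ ≤ ℙ {ω | E1 ω ≠ i} + ℙ {ω | E2 ω ≠ j} := measure_union_le _ _
          _ ≤ _ := by
              rw [ENNReal.ofReal_add hd1 hd2]
              exact add_le_add hP1 hP2
      have huniv : (1:ENNReal) ≤ ℙ A + ℙ Aᶜ := by
        have h := measure_union_le (μ := (ℙ : Measure Ω)) A Aᶜ
        rwa [Set.union_compl_self, measure_univ] at h
      have hkey : ENNReal.ofReal (1 - ε) + ℙ Aᶜ ≤ ℙ A + ℙ Aᶜ := by
        refine le_trans ?_ huniv
        calc ENNReal.ofReal (1 - ε) + ℙ Aᶜ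
            ≤ ENNReal.ofReal (1 - ε) + ENNReal.ofReal ((1 - Sfst ηε (Pi.single i 1 : Fin B → ℝ) i) +
              (1 - Ssnd ηε (Pi.single i 1 : Fin B → ℝ) (Pi.single j 1 : Fin B → ℝ) j)) :=
              add_le_add le_rfl hAc
          _ = ENNReal.ofReal ((1 - ε) + ((1 - Sfst ηε (Pi.single i 1 : Fin B → ℝ) i) +
              (1 - Ssnd ηε (Pi.single i 1 : Fin B → ℝ) (Pi.single j 1 : Fin B → ℝ) j))) := by
              rw [ENNReal.ofReal_add (show (0:ℝ) ≤ 1 - ε by linarith)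
                (show (0:ℝ) ≤ (1 - Sfst ηε (Pi.single i 1 : Fin B → ℝ) i) +
                  (1 - Ssnd ηε (Pi.single i 1 : Fin B → ℝ) (Pi.single j 1 : Fin B → ℝ) j) by linarith),
                ENNReal.ofReal_add hd1 hd2]
          _ ≤ ENNReal.ofReal 1 := by
              apply ENNReal.ofReal_le_ofReal
              have e1 : Sfst ηε (Pi.single i 1 : Fin B → ℝ) i
                  = softmax (ηε • (Pi.single i 1 : Fin B → ℝ)) i := rfl
              have e2 : Ssnd ηε (Pi.single i 1 : Fin B → ℝ) (Pi.single j 1 : Fin B → ℝ) j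
                  = softmax f j := by rw [hSsnd]
              rw [e1, e2]
              linarith
          _ = 1 := ENNReal.ofReal_one
      exact ENNReal.le_of_add_le_add_right (measure_ne_top _ _) hkey
end

section
/- Random ReLU Neurons Fail to be BNR with High Probability (Proposition 'relu-not-bnr-w.h.p.'): Let B ∈ ℕ₊ with B ≥ 3, and let a = (a_i)_{i=1}^B ∈ ℝ^B have i.i.d. coordinates, each drawn from an atom-free distribution symmetric about 0. Define f(x) = ReLU(aᵀx). Then, with probability at least 1 − (B+2)/2^B, there exist distinct indices i, j, k ∈ [B]₊ such that ReLU(aᵀe_i) = 0 < ReLU(aᵀe_j) = a_j < ReLU(aᵀe_k) = a_k; hence the i-th output coordinate of f takes at least three distinct values on {0,1}^B, so f is not BNR. -/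
/-!
By symmetry and the absence of an atom at `0`, each coordinate of `a` is positive with
probability `1/2`, independently of the others, so the set of positive coordinates is uniformly
distributed over the `2^B` subsets of `[B]`; and, the law having no atoms, the coordinates are
almost surely pairwise distinct. Unless that set is empty, everything, or a singleton
(`B + 2` patterns of probability `2^{-B}` each), there are a coordinate `a_i ≤ 0` and two
positive coordinates `a_j < a_k`, and then `ReLU(aᵀ·)` takes the three values `0 < a_j < a_k`
at `e_i, e_j, e_k`.
-/

open MeasureTheory ProbabilityTheory
open scoped ENNReal

open Set in
theorem MeasureTheory.Measure.measure_Iic_zero_eq_measure_Ioi_zero (μ : Measure ℝ)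
    [NullSingletonClass μ] [μ.IsNegInvariant] : μ (Iic 0) = μ (Ioi 0) := by
  rw [← measure_congr Iio_ae_eq_Iic, ← μ.measure_neg (Ioi 0), neg_Ioi, neg_zero]

open Set in
theorem MeasureTheory.Measure.measure_Ioi_zero_eq_half (μ : Measure ℝ) [IsProbabilityMeasure μ]
    [NullSingletonClass μ] [μ.IsNegInvariant] : μ (Ioi 0) = 2⁻¹ := by
  refine ENNReal.eq_inv_of_mul_eq_one_left ?_
  rw [mul_two, ← measure_univ (μ := μ), ← measure_add_measure_compl measurableSet_Ioi,
    compl_Ioi, μ.measure_Iic_zero_eq_measure_Ioi_zero]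

theorem ProbabilityTheory.IndepFun.measure_eq_eq_zero {Ω α : Type*} [MeasurableSpace Ω]
    [MeasurableSpace α] [MeasurableEq α] {P : Measure Ω} [IsFiniteMeasure P] {X Y : Ω → α}
    (hXY : IndepFun X Y P) (hX : AEMeasurable X P) (hY : AEMeasurable Y P)
    [NullSingletonClass (P.map Y)] : P {ω | X ω = Y ω} = 0 := by
  have hmap := (indepFun_iff_map_prod_eq_prod_map_map hX hY).1 hXY
  change P ((fun ω => (X ω, Y ω)) ⁻¹' Set.diagonal α) = 0
  rw [← Measure.map_apply_of_aemeasurable (hX.prodMk hY) measurableSet_diagonal, hmap,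
    Measure.prod_apply measurableSet_diagonal]
  simp [Set.preimage, Set.diagonal]

theorem MeasureTheory.one_sub_le_measure_of_measure_compl_le {Ω : Type*} [MeasurableSpace Ω]
    {P : Measure Ω} [IsProbabilityMeasure P] {s : Set Ω} {t : ℝ≥0∞} (h : P sᶜ ≤ t) :
    1 - t ≤ P s := by
  rw [tsub_le_iff_right, ← measure_univ (μ := P)]
  exact (measure_univ_le_add_compl s).trans (add_le_add_right h _)

section ReLU

variable {ι : Type*} [Fintype ι]

def ReLUNotBNR (x : ι → ℝ) : Prop :=
  (∃ i j k : ι, i ≠ j ∧ i ≠ k ∧ j ≠ k ∧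
      max (x i) 0 = 0 ∧ max (x j) 0 = x j ∧ max (x k) 0 = x k ∧ 0 < x j ∧ x j < x k) ∧
    ¬ ∃ u v : ℝ, ∀ b : ι → Bool,
      max (∑ i, x i * (cond (b i) 1 0 : ℝ)) 0 = u ∨ max (∑ i, x i * (cond (b i) 1 0 : ℝ)) 0 = v

noncomputable def positiveCoords (x : ι → ℝ) : Finset ι := Finset.univ.filter (0 < x ·)

theorem sum_mul_cond_decide_eq [DecidableEq ι] (x : ι → ℝ) (t : ι) :
    ∑ i, x i * (cond (decide (i = t)) 1 0 : ℝ) = x t := by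
  simp [Bool.cond_decide]

theorem reluNotBNR_of_le_of_lt {x : ι → ℝ} {i j k : ι} (hi : x i ≤ 0) (hj : 0 < x j)
    (hjk : x j < x k) : ReLUNotBNR x := by
  classical
  have hk : 0 < x k := hj.trans hjk
  refine ⟨⟨i, j, k, ne_of_apply_ne x (hi.trans_lt hj).ne, ne_of_apply_ne x (hi.trans_lt hk).ne,
    ne_of_apply_ne x hjk.ne, max_eq_right hi, max_eq_left hj.le, max_eq_left hk.le, hj, hjk⟩, ?_⟩
  rintro ⟨u, v, huv⟩
  have hval : ∀ t, max (x t) 0 = u ∨ max (x t) 0 = v := fun t => by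
    simpa only [sum_mul_cond_decide_eq] using huv (fun s => decide (s = t))
  rcases hval i with h0 | h0 <;> rcases hval j with h1 | h1 <;> rcases hval k with h2 | h2 <;>
    simp only [max_eq_right hi, max_eq_left hj.le, max_eq_left hk.le] at h0 h1 h2 <;> linarith

theorem reluNotBNR_of_injective {x : ι → ℝ} (hx : Function.Injective x)
    (hne : positiveCoords x ≠ Finset.univ) (hnt : (positiveCoords x).Nontrivial) :
    ReLUNotBNR x := by
  obtain ⟨i, hi⟩ := not_forall.1 (mt Finset.eq_univ_iff_forall.2 hne)
  obtain ⟨j, hj, k, hk, hjk⟩ := hnt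
  simp only [positiveCoords, Finset.mem_coe, Finset.mem_filter, Finset.mem_univ, true_and,
    not_lt] at hi hj hk
  rcases (hx.ne hjk).lt_or_gt with hlt | hlt
  · exact reluNotBNR_of_le_of_lt hi hj hlt
  · exact reluNotBNR_of_le_of_lt hi hk hlt

end ReLU

section IIDCoordinates

variable {Ω ι : Type*} [MeasurableSpace Ω] [Fintype ι] {P : Measure Ω} {μ : Measure ℝ}
  [IsProbabilityMeasure μ] [NullSingletonClass μ] {a : Ω → ι → ℝ}

theorem measure_positiveCoords_eq [μ.IsNegInvariant] (hind : iIndepFun (fun i ω => a ω i) P)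
    (hlaw : ∀ i, P.map (fun ω => a ω i) = μ) (S : Finset ι) :
    P {ω | positiveCoords (a ω) = S} = 2⁻¹ ^ Fintype.card ι := by
  classical
  let half : ι → Set ℝ := fun i => if i ∈ S then Set.Ioi 0 else Set.Iic 0
  have hhalf : ∀ i, MeasurableSet (half i) := fun i => by
    unfold half; split_ifs <;> measurability
  have hevent :
      {ω | positiveCoords (a ω) = S} = ⋂ i ∈ Finset.univ, (fun ω => a ω i) ⁻¹' half i := by
    ext ω
    simp only [positiveCoords, Finset.ext_iff, Finset.mem_filter, Finset.mem_univ, true_and]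
    simp only [Set.mem_iInter, Set.mem_preimage, half]
    refine forall_congr' fun i => ?_
    split_ifs with hi <;> simp [hi]
  rw [hevent, hind.measure_inter_preimage_eq_mul _ fun i _ => hhalf i, Finset.card_univ.symm,
    ← Finset.prod_const]
  refine Finset.prod_congr rfl fun i _ => ?_
  have hX : AEMeasurable (fun ω => a ω i) P :=
    .of_map_ne_zero (hlaw i ▸ IsProbabilityMeasure.ne_zero μ)
  rw [← Measure.map_apply_of_aemeasurable hX (hhalf i), hlaw i]
  unfold half
  split_ifs
  · exact μ.measure_Ioi_zero_eq_half
  · rw [μ.measure_Iic_zero_eq_measure_Ioi_zero, μ.measure_Ioi_zero_eq_half]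

theorem ae_injective_of_iIndepFun [IsFiniteMeasure P] (hind : iIndepFun (fun i ω => a ω i) P)
    (hlaw : ∀ i, P.map (fun ω => a ω i) = μ) : ∀ᵐ ω ∂P, Function.Injective (a ω) := by
  have hX : ∀ i, AEMeasurable (fun ω => a ω i) P := fun i =>
    .of_map_ne_zero (hlaw i ▸ IsProbabilityMeasure.ne_zero μ)
  have hpair : ∀ i j, ∀ᵐ ω ∂P, a ω i = a ω j → i = j := by
    intro i j
    by_cases hij : i = j
    · exact .of_forall fun _ _ => hij
    have : NullSingletonClass (P.map fun ω => a ω j) := hlaw j ▸ ‹_›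
    have hnull := (hind.indepFun hij).measure_eq_eq_zero (hX i) (hX j)
    filter_upwards [measure_eq_zero_iff_ae_notMem.1 hnull] with ω hω heq using absurd heq hω
  filter_upwards [ae_all_iff.2 fun i => ae_all_iff.2 (hpair i)] with ω hω i j using hω i j

theorem measure_not_reluNotBNR_le [IsFiniteMeasure P] [μ.IsNegInvariant]
    (hind : iIndepFun (fun i ω => a ω i) P) (hlaw : ∀ i, P.map (fun ω => a ω i) = μ) :
    P {ω | ¬ ReLUNotBNR (a ω)} ≤ (Fintype.card ι + 2) * 2⁻¹ ^ Fintype.card ι := by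
  classical
  let degenerate : Finset (Finset ι) :=
    insert Finset.univ (insert ∅ (Finset.univ.image fun j => {j}))
  have hcard : degenerate.card ≤ Fintype.card ι + 2 :=
    calc degenerate.card ≤ (Finset.univ.image fun j : ι => ({j} : Finset ι)).card + 1 + 1 :=
          (Finset.card_insert_le _ _).trans (by gcongr; exact Finset.card_insert_le _ _)
      _ ≤ Fintype.card ι + 2 := by grw [Finset.card_image_le, Finset.card_univ]
  have hdegenerate : ∀ x : ι → ℝ, Function.Injective x → ¬ ReLUNotBNR x →
      positiveCoords x ∈ degenerate := by
    intro x hx hbad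
    simp only [degenerate, Finset.mem_insert, Finset.mem_image, Finset.mem_univ, true_and]
    by_contra! ⟨hne, hnonempty, hsingle⟩
    obtain ⟨j, hj⟩ | hnt := hnonempty.exists_eq_singleton_or_nontrivial
    · exact hsingle j hj.symm
    · exact hbad (reluNotBNR_of_injective hx hne hnt)
  have hcover : {ω | ¬ ReLUNotBNR (a ω)} ⊆
      {ω | ¬ Function.Injective (a ω)} ∪ ⋃ S ∈ degenerate, {ω | positiveCoords (a ω) = S} := by
    intro ω hω
    by_cases hinj : Function.Injective (a ω)
    · exact Or.inr (Set.mem_biUnion (hdegenerate _ hinj hω) rfl)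
    · exact Or.inl hinj
  calc P {ω | ¬ ReLUNotBNR (a ω)}
      ≤ P {ω | ¬ Function.Injective (a ω)} +
          P (⋃ S ∈ degenerate, {ω | positiveCoords (a ω) = S}) :=
        (measure_mono hcover).trans (measure_union_le _ _)
    _ ≤ 0 + ∑ S ∈ degenerate, P {ω | positiveCoords (a ω) = S} := by
        gcongr
        · exact (ae_injective_of_iIndepFun hind hlaw).le
        · exact measure_biUnion_finset_le _ _
    _ = degenerate.card * 2⁻¹ ^ Fintype.card ι := by
        simp [measure_positiveCoords_eq hind hlaw]
    _ ≤ (Fintype.card ι + 2) * 2⁻¹ ^ Fintype.card ι := by gcongr; exact_mod_cast hcard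

end IIDCoordinates

theorem relu_not_bnr_whp_general
    {Ω : Type*} [MeasureSpace Ω] [IsProbabilityMeasure (ℙ : Measure Ω)]
    (B : ℕ)
    (μ : Measure ℝ) [IsProbabilityMeasure μ]
    (hatomfree : ∀ r : ℝ, μ {r} = 0)
    (hsymm : Measure.map (fun t => -t) μ = μ)
    (a : Ω → Fin B → ℝ)
    (hiid : iIndepFun (fun i ω => a ω i) ℙ)
    (hlaw : ∀ i, Measure.map (fun ω => a ω i) ℙ = μ) :
    ENNReal.ofReal (1 - ((B : ℝ) + 2) / 2 ^ B) ≤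
      ℙ {ω | (∃ i j k : Fin B, i ≠ j ∧ i ≠ k ∧ j ≠ k ∧
                max (a ω i) 0 = 0 ∧
                max (a ω j) 0 = a ω j ∧ max (a ω k) 0 = a ω k ∧
                0 < a ω j ∧ a ω j < a ω k) ∧
             ¬ (∃ u v : ℝ, ∀ x : Fin B → Bool,
                  max (∑ i, a ω i * (cond (x i) 1 0 : ℝ)) 0 = u ∨
                  max (∑ i, a ω i * (cond (x i) 1 0 : ℝ)) 0 = v)} := by
  have : NullSingletonClass μ := ⟨hatomfree⟩
  have : μ.IsNegInvariant := ⟨hsymm⟩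
  have hbad := measure_not_reluNotBNR_le hiid hlaw
  have hbound : ((B : ℝ≥0∞) + 2) * 2⁻¹ ^ B = ENNReal.ofReal (((B : ℝ) + 2) / 2 ^ B) := by
    rw [div_eq_mul_inv, ENNReal.ofReal_mul (by positivity), ← inv_pow,
      ENNReal.ofReal_pow (by norm_num), ENNReal.ofReal_inv_of_pos two_pos,
      ENNReal.ofReal_add (by positivity) zero_le_two, ENNReal.ofReal_natCast, ENNReal.ofReal_ofNat]
  rw [Fintype.card_fin, hbound] at hbad
  rw [ENNReal.ofReal_sub _ (by positivity), ENNReal.ofReal_one]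
  exact one_sub_le_measure_of_measure_compl_le hbad

/-- **Random ReLU neurons fail to be BNR w.h.p.** Let `B ≥ 3` and let
`a = (a_i)_{i=1}^B` have i.i.d. coordinates drawn from an atom-free
distribution `μ` symmetric about `0`.  Then with probability at least
`1 − (B+2)/2^B` there are distinct indices `i, j, k` with
`ReLU(aᵀe_i) = 0 < ReLU(aᵀe_j) = a_j < ReLU(aᵀe_k) = a_k`; on this event the
output of `f(x) = ReLU(aᵀx)` takes at least three distinct values on the
Boolean cube, so `f` is not BNR. -/
theorem relu_not_bnr_whp
    {Ω : Type*} [MeasureSpace Ω] [IsProbabilityMeasure (ℙ : Measure Ω)]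
    (B : ℕ) (hB : 3 ≤ B)
    (μ : Measure ℝ) [IsProbabilityMeasure μ]
    (hatomfree : ∀ r : ℝ, μ {r} = 0)
    (hsymm : Measure.map (fun t => -t) μ = μ)
    (a : Ω → Fin B → ℝ)
    (hmeas : ∀ i, Measurable fun ω => a ω i)
    (hiid : iIndepFun (fun i ω => a ω i) ℙ)
    (hlaw : ∀ i, Measure.map (fun ω => a ω i) ℙ = μ) :
    ENNReal.ofReal (1 - ((B : ℝ) + 2) / 2 ^ B) ≤
      ℙ {ω | (∃ i j k : Fin B, i ≠ j ∧ i ≠ k ∧ j ≠ k ∧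
                max (a ω i) 0 = 0 ∧
                max (a ω j) 0 = a ω j ∧ max (a ω k) 0 = a ω k ∧
                0 < a ω j ∧ a ω j < a ω k) ∧
             ¬ (∃ u v : ℝ, ∀ x : Fin B → Bool,
                  max (∑ i, a ω i * (cond (x i) 1 0 : ℝ)) 0 = u ∨
                  max (∑ i, a ω i * (cond (x i) 1 0 : ℝ)) 0 = v)} :=
  relu_not_bnr_whp_general B μ hatomfree hsymm a hiid hlaw
end
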